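/- arXiv:1108.4381 — 4 statements merged into one kernel-verified Lean document; each statement's English description precedes it below -/
import Mathlib

section
/- If f ∈ BD_p(Γ) satisfies f(x) ≥ 1 for all x ∈ V, then the pointwise reciprocal 1/f also belongs to BD_p(Γ); in particular, f is invertible in the Banach algebra BD_p(Γ). -/
open Filter Topology
open scoped ENNReal

namespace PHB

variable {V : Type*}

/-- A graph has bounded degree if there is a uniform finite bound on the
number of neighbors of each vertex. -/
def BoundedDegree (G : SimpleGraph V) : Prop :=
  ∃ k : ℕ, ∀ x : V, (G.neighborSet x).Finite ∧ (G.neighborSet x).ncard ≤ k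

/-- The `p`-Dirichlet sum of `f` over a set `S` of vertices:
`∑_{x ∈ S} ∑_{y ∈ N_x} |f y - f x| ^ p`, valued in `ℝ≥0∞`. -/
noncomputable def IpOn (G : SimpleGraph V) (p : ℝ) (S : Set V) (f : V → ℝ) : ℝ≥0∞ :=
  ∑' x : S, ∑' y : G.neighborSet (x : V), ENNReal.ofReal (|f (y : V) - f (x : V)| ^ p)

/-- The total `p`-Dirichlet sum `I_p(f, V)`. -/
noncomputable def Ip (G : SimpleGraph V) (p : ℝ) (f : V → ℝ) : ℝ≥0∞ :=
  IpOn G p Set.univ f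

/-- `D_p(Γ)`: real functions with finite `p`-Dirichlet sum. -/
def Dirichlet (G : SimpleGraph V) (p : ℝ) : Set (V → ℝ) :=
  {f | Ip G p f ≠ ∞}

/-- `ℓ^∞(Γ)`: bounded real functions on the vertices. -/
def BddFun : Set (V → ℝ) :=
  {f | ∃ C : ℝ, ∀ x, |f x| ≤ C}

/-- `BD_p(Γ) = D_p(Γ) ∩ ℓ^∞(Γ)`. -/
def BDp (G : SimpleGraph V) (p : ℝ) : Set (V → ℝ) :=
  Dirichlet G p ∩ BddFun

/-- The sup norm `‖f‖_∞`. -/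
noncomputable def supNorm [Nonempty V] (f : V → ℝ) : ℝ :=
  ⨆ x, |f x|

/-- The norm `‖f‖_{BD_p} = I_p(f,V)^{1/p} + ‖f‖_∞` on `BD_p(Γ)`. -/
noncomputable def BDpNorm [Nonempty V] (G : SimpleGraph V) (p : ℝ) (f : V → ℝ) : ℝ :=
  (Ip G p f).toReal ^ (1 / p) + supNorm f

/-- The norm `‖f‖_{D_p} = (I_p(f,V) + |f o|^p)^{1/p}` on `D_p(Γ)`, for a fixed vertex `o`. -/
noncomputable def DpNorm (G : SimpleGraph V) (p : ℝ) (o : V) (f : V → ℝ) : ℝ :=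
  ((Ip G p f).toReal + |f o| ^ p) ^ (1 / p)

/-- The `p`-Laplacian `Δ_p f (x) = ∑_{y ∈ N_x} |f y - f x|^{p-2} (f y - f x)`
(with the convention that a summand vanishes when `f y = f x`). -/
noncomputable def pLap (G : SimpleGraph V) (p : ℝ) (f : V → ℝ) (x : V) : ℝ :=
  ∑' y : G.neighborSet x, |f (y : V) - f x| ^ (p - 2) * (f (y : V) - f x)

/-- `BHD_p(Γ)`: bounded `p`-harmonic functions with finite `p`-Dirichlet sum. -/
def BHDp (G : SimpleGraph V) (p : ℝ) : Set (V → ℝ) :=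
  {f | f ∈ BDp G p ∧ ∀ x, pLap G p f x = 0}

/-- The outer boundary `∂S`: vertices outside `S` with a neighbor in `S`. -/
def outerBoundary (G : SimpleGraph V) (S : Set V) : Set V :=
  {x | x ∉ S ∧ ∃ y ∈ S, G.Adj x y}

/-- A set of vertices is connected if the induced subgraph is connected. -/
def ConnectedSubset (G : SimpleGraph V) (S : Set V) : Prop :=
  (G.induce S).Connected

/-- `C` is a connected component of `S`: a maximal connected subset of `S`. -/
def IsComponentOf (G : SimpleGraph V) (C S : Set V) : Prop :=
  C.Nonempty ∧ C ⊆ S ∧ ConnectedSubset G C ∧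
    ∀ C', C ⊆ C' → C' ⊆ S → ConnectedSubset G C' → C' = C

/-- `u` is an inner potential for `U`: a nonnegative member of `BD_p(Γ)` that is
`p`-harmonic on `U`, vanishes on `∂U`, and has supremum `1` over `U`. -/
def InnerPotential (G : SimpleGraph V) (p : ℝ) (U : Set V) (u : V → ℝ) : Prop :=
  u ∈ BDp G p ∧ (∀ x, 0 ≤ u x) ∧ (∀ x ∈ U, pLap G p u x = 0) ∧
    (∀ x ∈ outerBoundary G U, u x = 0) ∧ IsLUB (u '' U) 1

/-- A `D_p`-massive subset: an infinite connected set with nonempty outer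
boundary admitting an inner potential. -/
def DpMassive (G : SimpleGraph V) (p : ℝ) (U : Set V) : Prop :=
  U.Infinite ∧ ConnectedSubset G U ∧ (outerBoundary G U).Nonempty ∧
    ∃ u, InnerPotential G p U u

/-- A character of the Banach algebra `BD_p(Γ)`: a nonzero (equivalently,
unital) ring homomorphism `BD_p(Γ) → ℂ`. -/
structure PCharacter (G : SimpleGraph V) (p : ℝ) where
  toFun : {f : V → ℝ // f ∈ BDp G p} → ℂ
  map_add' : ∀ f g h : {f : V → ℝ // f ∈ BDp G p},
    (h : V → ℝ) = (f : V → ℝ) + (g : V → ℝ) → toFun h = toFun f + toFun g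
  map_mul' : ∀ f g h : {f : V → ℝ // f ∈ BDp G p},
    (h : V → ℝ) = (f : V → ℝ) * (g : V → ℝ) → toFun h = toFun f * toFun g
  map_one' : ∀ h : {f : V → ℝ // f ∈ BDp G p}, (h : V → ℝ) = 1 → toFun h = 1

/-- `Sp(BD_p(Γ))` carries the weak-* topology: the topology of pointwise
convergence on elements of `BD_p(Γ)`. -/
noncomputable instance (G : SimpleGraph V) (p : ℝ) : TopologicalSpace (PCharacter G p) :=
  TopologicalSpace.induced (fun χ => χ.toFun) inferInstance

/-- The evaluation map `i : V → Sp(BD_p(Γ))`, `(i x) f = f x`. -/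
def evalChar (G : SimpleGraph V) (p : ℝ) (x : V) : PCharacter G p where
  toFun f := ((f : V → ℝ) x : ℂ)
  map_add' f g h hh := by
    show ((h : V → ℝ) x : ℂ) = ((f : V → ℝ) x : ℂ) + ((g : V → ℝ) x : ℂ)
    rw [hh]; push_cast [Pi.add_apply]; ring
  map_mul' f g h hh := by
    show ((h : V → ℝ) x : ℂ) = ((f : V → ℝ) x : ℂ) * ((g : V → ℝ) x : ℂ)
    rw [hh]; push_cast [Pi.mul_apply]; ring
  map_one' h hh := by
    show ((h : V → ℝ) x : ℂ) = 1
    rw [hh]; simp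

/-- The closure of `C_c(Γ)` in `(D_p(Γ), ‖·‖_{D_p})`. -/
def CcClosure (G : SimpleGraph V) (p : ℝ) (o : V) : Set (V → ℝ) :=
  {f | f ∈ Dirichlet G p ∧ ∀ ε > 0, ∃ g : V → ℝ,
      (Function.support g).Finite ∧ DpNorm G p o (f - g) < ε}

/-- `B(C̄_c)`: the bounded elements of the `D_p`-closure of `C_c(Γ)`. -/
def BCc (G : SimpleGraph V) (p : ℝ) (o : V) : Set (V → ℝ) :=
  CcClosure G p o ∩ BddFun

/-- The `p`-Royden boundary `R_p(Γ) = Sp(BD_p(Γ)) \ i(V)`. -/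
def RoydenBoundary (G : SimpleGraph V) (p : ℝ) : Set (PCharacter G p) :=
  (Set.range (evalChar G p))ᶜ

/-- The `p`-harmonic boundary
`∂_p(Γ) = {χ ∈ R_p(Γ) : χ f = 0 for all f ∈ B(C̄_c)}`. -/
def pHarmonicBoundary (G : SimpleGraph V) (p : ℝ) (o : V) : Set (PCharacter G p) :=
  {χ | χ ∈ RoydenBoundary G p ∧ ∀ f : {f : V → ℝ // f ∈ BDp G p},
      (f : V → ℝ) ∈ BCc G p o → χ.toFun f = 0}

/-- One-sided infinite self-avoiding paths in the subgraph induced on `A`. -/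
def IsPathIn (G : SimpleGraph V) (A : Set V) (γ : ℕ → V) : Prop :=
  Function.Injective γ ∧ (∀ n, G.Adj (γ n) (γ (n + 1))) ∧ ∀ n, γ n ∈ A

/-- `P_A`: the family of one-sided infinite self-avoiding paths in `Γ_A`. -/
def pathsIn (G : SimpleGraph V) (A : Set V) : Set (ℕ → V) :=
  {γ | IsPathIn G A γ}

/-- The `p`-modulus `λ_p(Q)⁻¹` of a path family `Q`: the infimum of
`∑_{e ∈ E} ρ(e)^p` over all densities `ρ` with `∑_{e ∈ Ed(γ)} ρ(e) ≥ 1`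
for every `γ ∈ Q`.  `λ_p(Q) = ∞` corresponds to `pModulus Q = 0`. -/
noncomputable def pModulus (G : SimpleGraph V) (p : ℝ) (Q : Set (ℕ → V)) : ℝ≥0∞ :=
  ⨅ (ρ : Sym2 V → ℝ≥0∞)
    (_ : ∀ γ ∈ Q, 1 ≤ ∑' n : ℕ, ρ s(γ n, γ (n + 1))),
      ∑' e : G.edgeSet, ρ (e : Sym2 V) ^ p

/-- A property `P` holds for `p`-almost every path in `Q` if the family of
paths of `Q` failing `P` has infinite extremal length (zero `p`-modulus). -/
def AlmostEvery (G : SimpleGraph V) (p : ℝ) (Q : Set (ℕ → V)) (P : (ℕ → V) → Prop) : Prop :=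
  pModulus G p {γ ∈ Q | ¬ P γ} = 0

/-- `f(γ) = c` for `p`-almost every path `γ ∈ P_A`. -/
def AsympConst (G : SimpleGraph V) (p : ℝ) (A : Set V) (f : V → ℝ) (c : ℝ) : Prop :=
  AlmostEvery G p (pathsIn G A)
    (fun γ => Tendsto (fun n => f (γ n)) atTop (nhds c))

/-- A set has property AC if every function in `BHD_p(Γ)` is asymptotically
constant on it. -/
def PropertyAC (G : SimpleGraph V) (p : ℝ) (A : Set V) : Prop :=
  ∀ h ∈ BHDp G p, ∃ c : ℝ, AsympConst G p A h c

/-- The `p`-capacity `Cap_p(A, ∞, S)`: the infimum of `I_p(u, S)` over functions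
`u` that are finitely supported on `S ∪ ∂S` and equal to `1` on `A`. -/
noncomputable def pCapacity (G : SimpleGraph V) (p : ℝ) (A S : Set V) : ℝ≥0∞ :=
  ⨅ (u : V → ℝ)
    (_ : ((S ∪ outerBoundary G S) ∩ Function.support u).Finite ∧ ∀ x ∈ A, u x = 1),
      IpOn G p S u

/-- An infinite connected set `S` is `p`-hyperbolic if `Cap_p(A, ∞, S) > 0` for
some nonempty finite set `A`. -/
def pHyperbolic (G : SimpleGraph V) (p : ℝ) (S : Set V) : Prop :=
  S.Infinite ∧ ConnectedSubset G S ∧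
    ∃ A : Set V, A.Finite ∧ A.Nonempty ∧ 0 < pCapacity G p A S

end PHB

open PHB Filter Topology

theorem abs_inv_sub_inv_le_abs_sub {α : Type*} [Field α] [LinearOrder α]
    [IsStrictOrderedRing α] {a b : α} (ha : 1 ≤ a) (hb : 1 ≤ b) :
    |b⁻¹ - a⁻¹| ≤ |b - a| := by
  have hab : 1 ≤ b * a := one_le_mul_of_one_le_of_one_le hb ha
  rw [inv_sub_inv (by positivity) (by positivity), abs_div, abs_sub_comm,
    abs_of_pos (one_pos.trans_le hab)]
  exact div_le_self (abs_nonneg _) hab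

namespace PHB

variable {V : Type*} (G : SimpleGraph V) {p : ℝ}

theorem IpOn_mono_of_abs_sub_le {f g : V → ℝ} (hp : 0 ≤ p) (S : Set V)
    (hgf : ∀ x y, G.Adj x y → |g y - g x| ≤ |f y - f x|) : IpOn G p S g ≤ IpOn G p S f :=
  ENNReal.tsum_le_tsum fun x => ENNReal.tsum_le_tsum fun y =>
    ENNReal.ofReal_le_ofReal <| Real.rpow_le_rpow (abs_nonneg _) (hgf x y y.2) hp

theorem mem_Dirichlet_of_abs_sub_le {f g : V → ℝ} (hp : 0 ≤ p) (hf : f ∈ Dirichlet G p)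
    (hgf : ∀ x y, G.Adj x y → |g y - g x| ≤ |f y - f x|) : g ∈ Dirichlet G p :=
  ne_top_of_le_ne_top hf (IpOn_mono_of_abs_sub_le G hp Set.univ hgf)

end PHB

theorem reciprocal_mem_BDp_general {V : Type*} (G : SimpleGraph V)
    (p : ℝ) (hp : 1 < p)
    (f : V → ℝ) (hf : f ∈ BDp G p) (h1 : ∀ x, 1 ≤ f x) :
    (fun x => (f x)⁻¹) ∈ BDp G p ∧ f * (fun x => (f x)⁻¹) = 1 := by
  have hf_pos : ∀ x, 0 < f x := fun x => one_pos.trans_le (h1 x)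
  refine ⟨⟨?_, 1, fun x => ?_⟩, funext fun x => mul_inv_cancel₀ (hf_pos x).ne'⟩
  · exact mem_Dirichlet_of_abs_sub_le G (zero_le_one.trans hp.le) hf.1
      fun x y _ => abs_inv_sub_inv_le_abs_sub (h1 x) (h1 y)
  · rw [abs_inv, abs_of_pos (hf_pos x)]
    exact inv_le_one_of_one_le₀ (h1 x)

/-- If `f ∈ BD_p(Γ)` and `f ≥ 1` everywhere, then the pointwise reciprocal
`1/f` is in `BD_p(Γ)`; in particular `f` is invertible in `BD_p(Γ)`. -/
theorem reciprocal_mem_BDp {V : Type*} [Countable V] [Infinite V] (G : SimpleGraph V)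
    (hG : G.Connected) (hdeg : BoundedDegree G) (p : ℝ) (hp : 1 < p)
    (f : V → ℝ) (hf : f ∈ BDp G p) (h1 : ∀ x, 1 ≤ f x) :
    (fun x => (f x)⁻¹) ∈ BDp G p ∧ f * (fun x => (f x)⁻¹) = 1 :=
  reciprocal_mem_BDp_general G p hp f hf h1
end

section
/- For all f, g ∈ BD_p(Γ), the pointwise product fg belongs to BD_p(Γ) and ‖fg‖_{BD_p} ≤ ‖f‖_{BD_p} · ‖g‖_{BD_p}. -/
/-!
On an edge, `f y g y - f x g x = (f y - f x) g y + f x (g y - g x)`, so Minkowski's inequality in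
`ℓ^p` of the directed edges gives `I_p(fg)^{1/p} ≤ ‖g‖_∞ I_p(f)^{1/p} + ‖f‖_∞ I_p(g)^{1/p}`.
Together with `‖fg‖_∞ ≤ ‖f‖_∞ ‖g‖_∞` these are four of the terms of
`(I_p(f)^{1/p} + ‖f‖_∞)(I_p(g)^{1/p} + ‖g‖_∞)`, and the remaining one is nonnegative.
-/

open Filter Topology
open scoped ENNReal

open PHB Filter Topology

namespace ENNReal

variable {ι : Type*} {p : ℝ}

theorem tsum_rpow_add_le (hp : 1 ≤ p) (F G : ι → ℝ≥0∞) :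
    (∑' i, (F i + G i) ^ p) ^ (1 / p) ≤
      (∑' i, F i ^ p) ^ (1 / p) + (∑' i, G i ^ p) ^ (1 / p) := by
  -- the `lintegral` version for the counting measure on `ι` with the discrete σ-algebra
  let _ : MeasurableSpace ι := ⊤
  simpa only [MeasureTheory.lintegral_count, Pi.add_apply] using
    lintegral_Lp_add_le (μ := MeasureTheory.Measure.count (α := ι))
      Measurable.of_discrete.aemeasurable Measurable.of_discrete.aemeasurable hp

theorem tsum_mul_rpow_rpow_one_div (hp : 0 < p) (c : ℝ≥0∞) (F : ι → ℝ≥0∞) :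
    (∑' i, (c * F i) ^ p) ^ (1 / p) = c * (∑' i, F i ^ p) ^ (1 / p) := by
  simp_rw [mul_rpow_of_nonneg _ _ hp.le]
  rw [ENNReal.tsum_mul_left, mul_rpow_of_nonneg _ _ (by positivity), ← rpow_mul,
    mul_one_div_cancel hp.ne', rpow_one]

theorem tsum_rpow_le_of_le_mul_add_mul (hp : 1 ≤ p) {F G H : ι → ℝ≥0∞} {a b : ℝ≥0∞}
    (hH : ∀ i, H i ≤ a * F i + b * G i) :
    (∑' i, H i ^ p) ^ (1 / p) ≤ a * (∑' i, F i ^ p) ^ (1 / p) + b * (∑' i, G i ^ p) ^ (1 / p) := by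
  have hp0 : 0 < p := zero_lt_one.trans_le hp
  calc (∑' i, H i ^ p) ^ (1 / p)
      ≤ (∑' i, (a * F i + b * G i) ^ p) ^ (1 / p) := by gcongr with i; exact hH i
    _ ≤ (∑' i, (a * F i) ^ p) ^ (1 / p) + (∑' i, (b * G i) ^ p) ^ (1 / p) :=
        tsum_rpow_add_le hp _ _
    _ = a * (∑' i, F i ^ p) ^ (1 / p) + b * (∑' i, G i ^ p) ^ (1 / p) := by
        rw [tsum_mul_rpow_rpow_one_div hp0, tsum_mul_rpow_rpow_one_div hp0]

end ENNReal

theorem abs_mul_sub_mul_le {f₀ f₁ g₀ g₁ a b : ℝ} (hf : |f₀| ≤ a) (hg : |g₁| ≤ b) :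
    |f₁ * g₁ - f₀ * g₀| ≤ b * |f₁ - f₀| + a * |g₁ - g₀| :=
  calc |f₁ * g₁ - f₀ * g₀| = |(f₁ - f₀) * g₁ + f₀ * (g₁ - g₀)| := by ring_nf
    _ ≤ |f₁ - f₀| * |g₁| + |f₀| * |g₁ - g₀| := by
        rw [← abs_mul, ← abs_mul]; exact abs_add_le _ _
    _ ≤ b * |f₁ - f₀| + a * |g₁ - g₀| := by
        rw [mul_comm b]; gcongr

namespace PHB

variable {V : Type*}

theorem mul_mem_bddFun {f g : V → ℝ} (hf : f ∈ BddFun) (hg : g ∈ BddFun) : f * g ∈ BddFun := by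
  obtain ⟨Cf, hCf⟩ := hf
  obtain ⟨Cg, hCg⟩ := hg
  refine ⟨Cf * Cg, fun x => ?_⟩
  rw [Pi.mul_apply, abs_mul]
  exact mul_le_mul (hCf x) (hCg x) (abs_nonneg _) ((abs_nonneg _).trans (hCf x))

section SupNorm

variable [Nonempty V] {f g : V → ℝ}

theorem supNorm_nonneg (f : V → ℝ) : 0 ≤ supNorm f :=
  Real.iSup_nonneg fun _ => abs_nonneg _

theorem abs_le_supNorm (hf : f ∈ BddFun) (x : V) : |f x| ≤ supNorm f := by
  obtain ⟨C, hC⟩ := hf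
  exact le_ciSup (f := fun x => |f x|) ⟨C, by rintro _ ⟨y, rfl⟩; exact hC y⟩ x

theorem supNorm_mul_le (hf : f ∈ BddFun) (hg : g ∈ BddFun) :
    supNorm (f * g) ≤ supNorm f * supNorm g :=
  ciSup_le fun x => by
    rw [Pi.mul_apply, abs_mul]
    exact mul_le_mul (abs_le_supNorm hf x) (abs_le_supNorm hg x) (abs_nonneg _)
      (supNorm_nonneg f)

end SupNorm

section Dirichlet

variable (G : SimpleGraph V) {p : ℝ}

theorem Ip_eq_tsum_sigma (hp : 0 ≤ p) (h : V → ℝ) :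
    Ip G p h = ∑' z : Σ x, G.neighborSet x, ENNReal.ofReal |h z.2 - h z.1| ^ p := by
  calc Ip G p h = ∑' x, ∑' y : G.neighborSet x, ENNReal.ofReal (|h y - h x| ^ p) :=
        tsum_univ fun x => ∑' y : G.neighborSet x, ENNReal.ofReal (|h y - h x| ^ p)
    _ = _ := by
        rw [ENNReal.tsum_sigma']
        exact tsum_congr fun x => tsum_congr fun y =>
          (ENNReal.ofReal_rpow_of_nonneg (abs_nonneg _) hp).symm

theorem Ip_mul_rpow_le (hp : 1 ≤ p) {f g : V → ℝ} {a b : ℝ} (ha : ∀ x, |f x| ≤ a)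
    (hb : ∀ x, |g x| ≤ b) :
    Ip G p (f * g) ^ (1 / p) ≤
      ENNReal.ofReal b * Ip G p f ^ (1 / p) + ENNReal.ofReal a * Ip G p g ^ (1 / p) := by
  have hp0 : 0 ≤ p := zero_le_one.trans hp
  simp only [Ip_eq_tsum_sigma G hp0]
  refine ENNReal.tsum_rpow_le_of_le_mul_add_mul hp fun z => ?_
  have ha0 : 0 ≤ a := (abs_nonneg _).trans (ha z.1)
  have hb0 : 0 ≤ b := (abs_nonneg _).trans (hb z.1)
  rw [← ENNReal.ofReal_mul hb0, ← ENNReal.ofReal_mul ha0, ← ENNReal.ofReal_add (by positivity)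
    (by positivity)]
  exact ENNReal.ofReal_le_ofReal (abs_mul_sub_mul_le (ha _) (hb _))

theorem mul_mem_BDp (hp : 1 ≤ p) {f g : V → ℝ} (hf : f ∈ BDp G p) (hg : g ∈ BDp G p) :
    f * g ∈ BDp G p := by
  obtain ⟨hfD, Cf, hCf⟩ := hf
  obtain ⟨hgD, Cg, hCg⟩ := hg
  refine ⟨fun htop => ?_, mul_mem_bddFun ⟨Cf, hCf⟩ ⟨Cg, hCg⟩⟩
  have key := Ip_mul_rpow_le G hp hCf hCg
  rw [htop, ENNReal.top_rpow_of_pos (by positivity), top_le_iff] at key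
  exact absurd key (by finiteness)

theorem toReal_Ip_mul_rpow_le [Nonempty V] (hp : 1 ≤ p) {f g : V → ℝ} (hf : f ∈ BDp G p)
    (hg : g ∈ BDp G p) :
    (Ip G p (f * g)).toReal ^ (1 / p) ≤
      supNorm g * (Ip G p f).toReal ^ (1 / p) + supNorm f * (Ip G p g).toReal ^ (1 / p) := by
  have key := Ip_mul_rpow_le G hp (abs_le_supNorm hf.2) (abs_le_supNorm hg.2)
  have hfT : Ip G p f ≠ ∞ := hf.1
  have hgT : Ip G p g ≠ ∞ := hg.1
  have := ENNReal.toReal_mono (by finiteness) key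
  rwa [ENNReal.toReal_add (by finiteness) (by finiteness), ENNReal.toReal_mul,
    ENNReal.toReal_mul, ENNReal.toReal_ofReal (supNorm_nonneg g),
    ENNReal.toReal_ofReal (supNorm_nonneg f), ← ENNReal.toReal_rpow, ← ENNReal.toReal_rpow,
    ← ENNReal.toReal_rpow] at this

end Dirichlet

end PHB

theorem BDp_submultiplicative_general {V : Type*} [Infinite V] (G : SimpleGraph V)
    (p : ℝ) (hp : 1 < p)
    (f g : V → ℝ) (hf : f ∈ BDp G p) (hg : g ∈ BDp G p) :
    f * g ∈ BDp G p ∧ BDpNorm G p (f * g) ≤ BDpNorm G p f * BDpNorm G p g := by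
  refine ⟨mul_mem_BDp G hp.le hf hg, ?_⟩
  have hIp := toReal_Ip_mul_rpow_le G hp.le hf hg
  have hsup := supNorm_mul_le hf.2 hg.2
  have hIpf : 0 ≤ (Ip G p f).toReal ^ (1 / p) := by positivity
  have hIpg : 0 ≤ (Ip G p g).toReal ^ (1 / p) := by positivity
  unfold BDpNorm
  nlinarith [mul_nonneg hIpf hIpg]

/-- `BD_p(Γ)` is closed under pointwise products and the norm is
submultiplicative: `‖fg‖_{BD_p} ≤ ‖f‖_{BD_p} ‖g‖_{BD_p}`. -/
theorem BDp_submultiplicative {V : Type*} [Countable V] [Infinite V] (G : SimpleGraph V)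
    (hG : G.Connected) (hdeg : BoundedDegree G) (p : ℝ) (hp : 1 < p)
    (f g : V → ℝ) (hf : f ∈ BDp G p) (hg : g ∈ BDp G p) :
    f * g ∈ BDp G p ∧ BDpNorm G p (f * g) ≤ BDpNorm G p f * BDpNorm G p g :=
  BDp_submultiplicative_general G p hp f g hf hg
end

section
/- Every D_p-massive subset of V is p-hyperbolic. -/
/-!
Let `w` be the inner potential `u` cut off to `0` outside `U`; it is still `p`-harmonic on `U`.
Connectedness of `U` and `u = 0` on `∂U` give a vertex `a ∈ U` where `w` is not locally
constant. If `v` is finitely supported with `v a = 1`, testing the harmonicity of `w` against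
`w |v|` (discrete Green formula) and splitting the gradient of the product gives
`∑_{y ~ a} |w a - w y|^p ≤ ∑ |∇w|^{p-1} |∇v| ≤ (2 I_p(w,U))^{1/q} (2 I_p(v,U))^{1/p}`
by Hölder, so `I_p(v,U)` is bounded below and `Cap_p({a}, ∞, U) > 0`.
-/

open Filter Topology
open scoped ENNReal

namespace PHB

variable {V : Type*}

lemma abs_rpow_sub_two_mul_mul_self {p : ℝ} (hp : p ≠ 0) (t : ℝ) :
    |t| ^ (p - 2) * t * t = |t| ^ p := by
  rcases eq_or_ne t 0 with rfl | ht
  · simp [Real.zero_rpow hp]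
  · have h2 : |t| ^ (p - 2) = |t| ^ p / |t| ^ 2 := by
      exact_mod_cast Real.rpow_sub_natCast (abs_ne_zero.2 ht) p 2
    rw [h2, mul_assoc, ← abs_mul_abs_self t, ← sq]
    field_simp

lemma abs_abs_rpow_sub_two_mul {p : ℝ} (hp : p ≠ 1) (t : ℝ) :
    |(|t| ^ (p - 2) * t)| = |t| ^ (p - 1) := by
  rcases eq_or_ne t 0 with rfl | ht
  · simp [Real.zero_rpow (sub_ne_zero.2 hp)]
  · have h1 : |t| ^ (p - 2) = |t| ^ (p - 1) / |t| := by
      rw [← Real.rpow_sub_one (abs_ne_zero.2 ht), sub_sub, one_add_one_eq_two]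
    rw [abs_mul, abs_of_nonneg (Real.rpow_nonneg (abs_nonneg t) _), h1,
      div_mul_cancel₀ _ (abs_ne_zero.2 ht)]

lemma pLap_congr {G : SimpleGraph V} {p : ℝ} {f g : V → ℝ} {x : V}
    (h : Set.EqOn f g (insert x (G.neighborSet x))) : pLap G p f x = pLap G p g x := by
  unfold pLap
  rw [h (Set.mem_insert x _)]
  exact tsum_congr fun y => by rw [h (Set.mem_insert_of_mem x y.2)]

lemma IpOn_congr {G : SimpleGraph V} {p : ℝ} {S : Set V} {f g : V → ℝ}
    (h : ∀ x ∈ S, Set.EqOn f g (insert x (G.neighborSet x))) : IpOn G p S f = IpOn G p S g :=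
  tsum_congr fun x => tsum_congr fun y => by
    rw [h x x.2 (Set.mem_insert _ _), h x x.2 (Set.mem_insert_of_mem _ y.2)]

lemma IpOn_abs_le (G : SimpleGraph V) {p : ℝ} (hp : 0 ≤ p) (S : Set V) (f : V → ℝ) :
    IpOn G p S (fun x => |f x|) ≤ IpOn G p S f :=
  ENNReal.tsum_le_tsum fun _ => ENNReal.tsum_le_tsum fun _ => ENNReal.ofReal_le_ofReal <|
    Real.rpow_le_rpow (abs_nonneg _) (abs_abs_sub_abs_le_abs_sub _ _) hp

lemma IpOn_le_Ip (G : SimpleGraph V) (p : ℝ) (S : Set V) (f : V → ℝ) :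
    IpOn G p S f ≤ Ip G p f :=
  ENNReal.tsum_mono_subtype (fun x => ∑' y : G.neighborSet x, ENNReal.ofReal (|f y - f x| ^ p))
    (Set.subset_univ S)

lemma indicator_eqOn_insert_neighborSet {G : SimpleGraph V} {U : Set V} {u : V → ℝ}
    (hu : ∀ x ∈ outerBoundary G U, u x = 0) {x : V} (hx : x ∈ U) :
    Set.EqOn (U.indicator u) u (insert x (G.neighborSet x)) := by
  rintro y (rfl | hy)
  · exact Set.indicator_of_mem hx u
  by_cases hyU : y ∈ U
  · exact Set.indicator_of_mem hyU u
  · rw [Set.indicator_of_notMem hyU, hu y ⟨hyU, x, hx, hy.symm⟩]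

lemma ConnectedSubset.exists_adj_ne {α : Type*} {G : SimpleGraph V} {U : Set V}
    (hU : ConnectedSubset G U) {f : V → α} {z b : V} (hz : z ∈ U)
    (hb : b ∈ outerBoundary G U) (hne : f b ≠ f z) :
    ∃ a ∈ U, ∃ c, G.Adj a c ∧ f c ≠ f a := by
  by_contra! hconst
  have hUconst : ∀ t : U, f t = f z := by
    intro t
    induction (SimpleGraph.reachable_iff_reflTransGen _ _).1 (hU.preconnected ⟨z, hz⟩ t) with
    | refl => rfl
    | tail _ hadj ih => rw [hconst _ (Subtype.prop _) _ (by simpa using hadj), ih]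
  obtain ⟨-, y, hy, hby⟩ := hb
  exact hne ((hconst y hy b hby.symm).trans (hUconst ⟨y, hy⟩))

namespace InnerPotential

variable {G : SimpleGraph V} {p : ℝ} {U : Set V} {u : V → ℝ}

lemma exists_pos (hu : InnerPotential G p U u) : ∃ z ∈ U, 0 < u z := by
  obtain ⟨-, -, -, -, hlub⟩ := hu
  by_contra! h
  have : (1 : ℝ) ≤ 0 := hlub.2 fun _ ⟨x, hx, hux⟩ => hux ▸ h x hx
  norm_num at this

lemma abs_indicator_le_one (hu : InnerPotential G p U u) (x : V) : |U.indicator u x| ≤ 1 := by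
  obtain ⟨-, hnonneg, -, -, hlub⟩ := hu
  by_cases hx : x ∈ U
  · rw [Set.indicator_of_mem hx, abs_of_nonneg (hnonneg x)]
    exact hlub.1 ⟨x, hx, rfl⟩
  · simp [Set.indicator_of_notMem hx]

end InnerPotential

noncomputable abbrev BoundedDegree.locallyFinite {G : SimpleGraph V} (h : BoundedDegree G) :
    G.LocallyFinite :=
  fun x => (h.choose_spec x).1.fintype

section LocallyFinite

variable {G : SimpleGraph V} [G.LocallyFinite]

lemma tsum_neighborSet {M : Type*} [AddCommMonoid M] [TopologicalSpace M] (x : V) (f : V → M) :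
    ∑' y : G.neighborSet x, f y = ∑ y ∈ G.neighborFinset x, f y := by
  rw [tsum_fintype, Finset.sum_set_coe]
  rfl

lemma pLap_eq_sum (p : ℝ) (f : V → ℝ) (x : V) :
    pLap G p f x = ∑ y ∈ G.neighborFinset x, |f y - f x| ^ (p - 2) * (f y - f x) :=
  tsum_neighborSet (G := G) x fun y => |f y - f x| ^ (p - 2) * (f y - f x)

lemma sum_neighborFinset_ofReal_le_IpOn {S : Set V} {K : Finset V} (hKS : ↑K ⊆ S)
    (p : ℝ) (f : V → ℝ) :
    ∑ x ∈ K, ∑ y ∈ G.neighborFinset x, ENNReal.ofReal (|f y - f x| ^ p) ≤ IpOn G p S f := by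
  rw [IpOn, tsum_subtype S fun x => ∑' y : G.neighborSet x, ENNReal.ofReal (|f y - f x| ^ p)]
  refine le_of_eq_of_le (Finset.sum_congr rfl fun x hx => ?_) (ENNReal.sum_le_tsum K)
  rw [Set.indicator_of_mem (hKS hx)]
  exact (tsum_neighborSet x _).symm

lemma sum_neighborFinset_le_toReal_IpOn {S : Set V} {K : Finset V} (hKS : ↑K ⊆ S)
    {p : ℝ} {f : V → ℝ} (hf : IpOn G p S f ≠ ⊤) :
    ∑ x ∈ K, ∑ y ∈ G.neighborFinset x, |f y - f x| ^ p ≤ (IpOn G p S f).toReal := by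
  have hnn : ∀ x y, 0 ≤ |f y - f x| ^ p := fun _ _ => Real.rpow_nonneg (abs_nonneg _) _
  rw [← ENNReal.ofReal_le_iff_le_toReal hf,
    ENNReal.ofReal_sum_of_nonneg fun x _ => Finset.sum_nonneg fun y _ => hnn x y]
  simp_rw [ENNReal.ofReal_sum_of_nonneg fun y _ => hnn _ y]
  exact sum_neighborFinset_ofReal_le_IpOn hKS p f

lemma sum_neighborFinset_rpow_pos {p : ℝ} {f : V → ℝ} {a c : V} (hac : G.Adj a c)
    (hne : f c ≠ f a) : 0 < ∑ y ∈ G.neighborFinset a, |f a - f y| ^ p :=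
  Finset.sum_pos' (fun _ _ => Real.rpow_nonneg (abs_nonneg _) _)
    ⟨c, (G.mem_neighborFinset a c).2 hac,
      Real.rpow_pos_of_pos (abs_pos.2 (sub_ne_zero.2 hne.symm)) p⟩

variable (G) in
open scoped Classical in
noncomputable def adjPairsMeeting (K : Finset V) : Finset (V × V) :=
  let B := K ∪ K.biUnion fun x => G.neighborFinset x
  (B ×ˢ B).filter fun e => G.Adj e.1 e.2 ∧ (e.1 ∈ K ∨ e.2 ∈ K)

variable {K : Finset V}

lemma mem_adjPairsMeeting {e : V × V} :
    e ∈ adjPairsMeeting G K ↔ G.Adj e.1 e.2 ∧ (e.1 ∈ K ∨ e.2 ∈ K) := by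
  simp only [adjPairsMeeting, Finset.mem_filter, Finset.mem_product, Finset.mem_union,
    Finset.mem_biUnion, SimpleGraph.mem_neighborFinset, and_iff_right_iff_imp]
  rintro ⟨hadj, h | h⟩
  · exact ⟨Or.inl h, Or.inr ⟨_, h, hadj⟩⟩
  · exact ⟨Or.inr ⟨_, h, hadj.symm⟩, Or.inl h⟩

lemma sum_neighborFinset_le_sum_adjPairsMeeting {F : V × V → ℝ} (hF : ∀ e, 0 ≤ F e) {a : V}
    (ha : a ∈ K) : ∑ y ∈ G.neighborFinset a, F (y, a) ≤ ∑ e ∈ adjPairsMeeting G K, F e := by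
  classical
  rw [← Finset.sum_image fun _ _ _ _ h => (Prod.ext_iff.1 h).1]
  refine Finset.sum_le_sum_of_subset_of_nonneg (fun e he => ?_) fun e _ _ => hF e
  obtain ⟨y, hy, rfl⟩ := Finset.mem_image.1 he
  exact mem_adjPairsMeeting.2 ⟨((G.mem_neighborFinset a y).1 hy).symm, Or.inr ha⟩

lemma sum_adjPairsMeeting_swap {M : Type*} [AddCommMonoid M] (F : V × V → M) :
    ∑ e ∈ adjPairsMeeting G K, F e.swap = ∑ e ∈ adjPairsMeeting G K, F e :=
  Finset.sum_equiv (Equiv.prodComm V V)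
    (fun e => by simp only [mem_adjPairsMeeting, Equiv.prodComm_apply, Prod.fst_swap,
      Prod.snd_swap, G.adj_comm, or_comm])
    fun _ _ => rfl

lemma sum_adjPairsMeeting_of_fst {M : Type*} [AddCommMonoid M] {F : V × V → M}
    (hF : ∀ e : V × V, e.1 ∉ K → F e = 0) :
    ∑ e ∈ adjPairsMeeting G K, F e = ∑ x ∈ K, ∑ y ∈ G.neighborFinset x, F (x, y) := by
  classical
  rw [← Finset.sum_filter_of_ne (p := fun e => e.1 ∈ K) fun e _ h => not_imp_comm.1 (hF e) h]
  refine Finset.sum_finset_product _ _ _ fun e => ?_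
  simp only [Finset.mem_filter, mem_adjPairsMeeting, SimpleGraph.mem_neighborFinset]
  tauto

lemma sum_adjPairsMeeting_le_two_mul {g : V × V → ℝ} (hg0 : ∀ e, 0 ≤ g e)
    (hg : ∀ e, g e.swap = g e) :
    ∑ e ∈ adjPairsMeeting G K, g e ≤ 2 * ∑ x ∈ K, ∑ y ∈ G.neighborFinset x, g (x, y) := by
  set g₁ := {e : V × V | e.1 ∈ K}.indicator g
  have hg₁ : ∀ e, 0 ≤ g₁ e := Set.indicator_nonneg fun e _ => hg0 e
  have hin : ∀ e : V × V, e.1 ∈ K → g₁ e = g e := fun e he =>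
    Set.indicator_of_mem (s := {e : V × V | e.1 ∈ K}) he g
  have hfst : ∑ e ∈ adjPairsMeeting G K, g₁ e = ∑ x ∈ K, ∑ y ∈ G.neighborFinset x, g (x, y) := by
    rw [sum_adjPairsMeeting_of_fst fun e he =>
      Set.indicator_of_notMem (s := {e : V × V | e.1 ∈ K}) he g]
    exact Finset.sum_congr rfl fun x hx => Finset.sum_congr rfl fun y _ => hin (x, y) hx
  calc ∑ e ∈ adjPairsMeeting G K, g e
      ≤ ∑ e ∈ adjPairsMeeting G K, (g₁ e + g₁ e.swap) := by
        refine Finset.sum_le_sum fun e he => ?_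
        rcases (mem_adjPairsMeeting.1 he).2 with h | h
        · linarith [hin e h, hg₁ e.swap]
        · linarith [(hin e.swap h).trans (hg e), hg₁ e]
    _ = 2 * ∑ x ∈ K, ∑ y ∈ G.neighborFinset x, g (x, y) := by
        rw [Finset.sum_add_distrib, sum_adjPairsMeeting_swap g₁, hfst]
        ring

lemma sum_adjPairsMeeting_rpow_le {S : Set V} (hKS : ↑K ⊆ S) {p : ℝ} {f : V → ℝ}
    (hf : IpOn G p S f ≠ ⊤) :
    ∑ e ∈ adjPairsMeeting G K, |f e.2 - f e.1| ^ p ≤ 2 * (IpOn G p S f).toReal :=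
  (sum_adjPairsMeeting_le_two_mul (fun _ => Real.rpow_nonneg (abs_nonneg _) _)
    fun e => by rw [Prod.fst_swap, Prod.snd_swap, abs_sub_comm]).trans
  (mul_le_mul_of_nonneg_left (sum_neighborFinset_le_toReal_IpOn hKS hf) zero_le_two)

lemma sum_adjPairsMeeting_mul_sub {Φ : V → V → ℝ} (hΦ : ∀ x y, Φ y x = -Φ x y) {h : V → ℝ}
    (hh : ∀ x ∉ K, h x = 0) :
    ∑ e ∈ adjPairsMeeting G K, Φ e.1 e.2 * (h e.2 - h e.1) =
      -2 * ∑ x ∈ K, h x * ∑ y ∈ G.neighborFinset x, Φ x y := by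
  have hfst : ∑ e ∈ adjPairsMeeting G K, Φ e.1 e.2 * h e.1 =
      ∑ x ∈ K, h x * ∑ y ∈ G.neighborFinset x, Φ x y := by
    rw [sum_adjPairsMeeting_of_fst fun e he => by rw [hh _ he, mul_zero]]
    simp_rw [Finset.mul_sum, mul_comm]
  have hsnd : ∑ e ∈ adjPairsMeeting G K, Φ e.1 e.2 * h e.2 =
      -∑ e ∈ adjPairsMeeting G K, Φ e.1 e.2 * h e.1 := by
    rw [← sum_adjPairsMeeting_swap fun e => Φ e.1 e.2 * h e.2, ← Finset.sum_neg_distrib]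
    exact Finset.sum_congr rfl fun e _ => by rw [Prod.fst_swap, Prod.snd_swap, hΦ, neg_mul]
  simp only [mul_sub, Finset.sum_sub_distrib, hsnd, hfst]
  ring

theorem sum_neighborFinset_rpow_le_of_harmonic {p q : ℝ} (hpq : p.HolderConjugate q)
    {K : Finset V} {w v : V → ℝ} (hharm : ∀ x ∈ K, pLap G p w x = 0) (hw : ∀ x, |w x| ≤ 1)
    (hv : ∀ x, 0 ≤ v x) (hsupp : ∀ x ∉ K, w x * v x = 0) {a : V} (ha : a ∈ K) (hva : v a = 1) :
    ∑ y ∈ G.neighborFinset a, |w a - w y| ^ p ≤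
      (∑ e ∈ adjPairsMeeting G K, |w e.2 - w e.1| ^ p) ^ (1 / q) *
        (∑ e ∈ adjPairsMeeting G K, |v e.2 - v e.1| ^ p) ^ (1 / p) := by
  set E := adjPairsMeeting G K
  set φ : ℝ → ℝ := fun t => |t| ^ (p - 2) * t
  have green : ∑ e ∈ E, φ (w e.2 - w e.1) * (w e.2 * v e.2 - w e.1 * v e.1) = 0 := by
    rw [sum_adjPairsMeeting_mul_sub (Φ := fun x y => φ (w y - w x)) (fun x y => ?_) hsupp]
    · simp only [φ, ← pLap_eq_sum]
      rw [Finset.sum_eq_zero fun x hx => by rw [hharm x hx, mul_zero], mul_zero]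
    · simp only [φ, ← neg_sub (w y), abs_neg, mul_neg]
  have product_rule : ∀ e : V × V,
      φ (w e.2 - w e.1) * (w e.2 * v e.2 - w e.1 * v e.1) =
        |w e.2 - w e.1| ^ p * v e.2 + w e.1 * φ (w e.2 - w e.1) * (v e.2 - v e.1) := by
    intro e
    rw [← abs_rpow_sub_two_mul_mul_self hpq.ne_zero]
    ring
  have lower : ∑ y ∈ G.neighborFinset a, |w a - w y| ^ p ≤
      ∑ e ∈ E, |w e.2 - w e.1| ^ p * v e.2 := by
    simpa [hva] using sum_neighborFinset_le_sum_adjPairsMeeting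
      (F := fun e => |w e.2 - w e.1| ^ p * v e.2)
      (fun e => mul_nonneg (Real.rpow_nonneg (abs_nonneg _) _) (hv _)) ha
  have upper : -∑ e ∈ E, w e.1 * φ (w e.2 - w e.1) * (v e.2 - v e.1) ≤
      ∑ e ∈ E, |w e.2 - w e.1| ^ (p - 1) * |v e.2 - v e.1| := by
    rw [← Finset.sum_neg_distrib]
    refine Finset.sum_le_sum fun e _ => (neg_le_abs _).trans ?_
    rw [abs_mul, abs_mul, abs_abs_rpow_sub_two_mul hpq.lt.ne']
    exact mul_le_of_le_one_left (by positivity) (hw e.1) |>.trans_eq' (by ring)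
  have holder := Real.inner_le_Lp_mul_Lq_of_nonneg E hpq.symm
    (f := fun e => |w e.2 - w e.1| ^ (p - 1)) (g := fun e => |v e.2 - v e.1|)
    (fun _ _ => Real.rpow_nonneg (abs_nonneg _) _) (fun _ _ => abs_nonneg _)
  simp only [← Real.rpow_mul (abs_nonneg _), hpq.sub_one_mul_conj] at holder
  simp only [product_rule, Finset.sum_add_distrib] at green
  linarith

theorem sum_neighborFinset_rpow_le_IpOn_mul {p q : ℝ} (hpq : p.HolderConjugate q) {U : Set V}
    {w : V → ℝ} (hharm : ∀ x ∈ U, pLap G p w x = 0) (hw : ∀ x, |w x| ≤ 1)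
    (hwU : ∀ x ∉ U, w x = 0) (hfin : IpOn G p U w ≠ ⊤) {a : V} (ha : a ∈ U) {v : V → ℝ}
    (hv : (U ∩ Function.support v).Finite) (hva : v a = 1) (hvfin : IpOn G p U v ≠ ⊤) :
    ∑ y ∈ G.neighborFinset a, |w a - w y| ^ p ≤
      (2 * (IpOn G p U w).toReal) ^ (1 / q) * (2 * (IpOn G p U v).toReal) ^ (1 / p) := by
  have hKU : ↑hv.toFinset ⊆ U := fun x hx => (hv.mem_toFinset.1 hx).1
  have habs := IpOn_abs_le G hpq.nonneg U v
  have hsupp : ∀ x ∉ hv.toFinset, w x * |v x| = 0 := by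
    intro x hx
    by_cases hxU : x ∈ U
    · have : v x = 0 := by simpa [hxU] using hx
      simp [this]
    · simp [hwU x hxU]
  refine (sum_neighborFinset_rpow_le_of_harmonic hpq (v := fun x => |v x|)
    (fun x hx => hharm x (hKU hx)) hw (fun x => abs_nonneg _) hsupp
    (hv.mem_toFinset.2 ⟨ha, by simp [hva]⟩) (by simp [hva])).trans ?_
  refine mul_le_mul (Real.rpow_le_rpow (by positivity)
    (sum_adjPairsMeeting_rpow_le hKU hfin) hpq.symm.one_div_pos.le)
    (Real.rpow_le_rpow (by positivity)
      ((sum_adjPairsMeeting_rpow_le hKU (ne_top_of_le_ne_top hvfin habs)).trans ?_)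
      hpq.one_div_pos.le) (by positivity) (by positivity)
  exact mul_le_mul_of_nonneg_left (ENNReal.toReal_mono hvfin habs) zero_le_two

theorem pCapacity_singleton_pos {p : ℝ} (hp : 1 < p) {U : Set V} {w : V → ℝ}
    (hharm : ∀ x ∈ U, pLap G p w x = 0) (hw : ∀ x, |w x| ≤ 1) (hwU : ∀ x ∉ U, w x = 0)
    (hfin : IpOn G p U w ≠ ⊤) {a : V} (ha : a ∈ U)
    (hκ : 0 < ∑ y ∈ G.neighborFinset a, |w a - w y| ^ p) : 0 < pCapacity G p {a} U := by
  have hpq := Real.HolderConjugate.conjExponent hp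
  set κ := ∑ y ∈ G.neighborFinset a, |w a - w y| ^ p
  set C := (2 * (IpOn G p U w).toReal) ^ (1 / p.conjExponent)
  have hC : 0 < C := by
    have hκI : κ ≤ (IpOn G p U w).toReal := by
      simpa [κ, abs_sub_comm] using
        sum_neighborFinset_le_toReal_IpOn (K := {a}) (by simpa using ha) hfin
    exact Real.rpow_pos_of_pos (by linarith) _
  refine lt_of_lt_of_le (ENNReal.ofReal_pos.2 (by positivity : 0 < (κ / C) ^ p / 2))
    (le_iInf₂ fun v ⟨hv, hva⟩ => ?_)
  rcases eq_or_ne (IpOn G p U v) ⊤ with htop | htop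
  · simp [htop]
  rw [ENNReal.ofReal_le_iff_le_toReal htop]
  have hdiv : κ / C ≤ (2 * (IpOn G p U v).toReal) ^ (1 / p) :=
    (div_le_iff₀' hC).2 <| sum_neighborFinset_rpow_le_IpOn_mul hpq hharm hw hwU hfin ha
      (hv.subset fun x hx => ⟨Or.inl hx.1, hx.2⟩) (hva a rfl) htop
  have := Real.rpow_le_rpow (by positivity) hdiv (by linarith : (0 : ℝ) ≤ p)
  rw [← Real.rpow_mul (by positivity), one_div_mul_cancel (by linarith), Real.rpow_one] at this
  linarith

end LocallyFinite

end PHB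

open PHB Filter Topology

theorem massive_pHyperbolic_general {V : Type*} (G : SimpleGraph V)
    (hdeg : BoundedDegree G) (p : ℝ) (hp : 1 < p)
    (U : Set V) (hU : DpMassive G p U) : pHyperbolic G p U := by
  obtain ⟨hUinf, hUconn, ⟨b, hb⟩, u, hu⟩ := hU
  let := hdeg.locallyFinite
  obtain ⟨z, hzU, hz⟩ := hu.exists_pos
  have hw1 := hu.abs_indicator_le_one
  obtain ⟨⟨hufin, -⟩, -, huharm, hubdry, -⟩ := hu
  have hwu : ∀ x ∈ U, Set.EqOn (U.indicator u) u (insert x (G.neighborSet x)) :=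
    fun x => indicator_eqOn_insert_neighborSet hubdry
  have hbz : U.indicator u b ≠ U.indicator u z := by
    rw [Set.indicator_of_notMem hb.1, Set.indicator_of_mem hzU]
    exact hz.ne
  obtain ⟨a, haU, c, hac, hca⟩ := hUconn.exists_adj_ne hzU hb hbz
  refine ⟨hUinf, hUconn, {a}, Set.finite_singleton a, Set.singleton_nonempty a, ?_⟩
  refine pCapacity_singleton_pos hp (fun x hx => ?_) hw1
    (fun x hx => Set.indicator_of_notMem hx u) ?_ haU (sum_neighborFinset_rpow_pos hac hca)
  · rw [pLap_congr (hwu x hx)]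
    exact huharm x hx
  · rw [IpOn_congr hwu]
    exact ne_top_of_le_ne_top hufin (IpOn_le_Ip G p U u)

/-- Every `D_p`-massive subset is `p`-hyperbolic. -/
theorem massive_pHyperbolic {V : Type*} [Countable V] [Infinite V] (G : SimpleGraph V)
    (hG : G.Connected) (hdeg : BoundedDegree G) (p : ℝ) (hp : 1 < p)
    (U : Set V) (hU : DpMassive G p U) : pHyperbolic G p U :=
  massive_pHyperbolic_general G hdeg p hp U hU
end

section
/- Let h ∈ BHD_p(Γ) and let F be an infinite connected subset of V. Let P_∞ be the set of paths γ = x_0 x_1 x_2 … in P_F for which lim_{n→∞} h(x_n) does not exist. Then λ_p(P_∞) = ∞, i.e. the family of paths in Γ_F along which h fails to converge has infinite extremal length of order p. -/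
open Filter Topology
open scoped ENNReal

open PHB Filter Topology

/-! The density `ρ = |dh|` on edges has `p`-energy at most `I_p(h) < ∞`. Along a path where `h`
diverges the `ρ`-length is infinite, since finite length would make `h ∘ γ` Cauchy. Hence `δρ` is
admissible for the divergent paths for every `δ > 0`, with energy `δ ^ p I_p(h) → 0`. -/

namespace PHB

variable {V : Type*} (G : SimpleGraph V) {p : ℝ}

theorem pModulus_le_tsum_rpow {Q : Set (ℕ → V)} {ρ : Sym2 V → ℝ≥0∞}
    (hρ : ∀ γ ∈ Q, 1 ≤ ∑' n : ℕ, ρ s(γ n, γ (n + 1))) :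
    pModulus G p Q ≤ ∑' e : G.edgeSet, ρ e ^ p :=
  iInf₂_le ρ hρ

theorem pModulus_eq_zero_of_tsum_eq_top (hp : 0 < p) {Q : Set (ℕ → V)} (ρ : Sym2 V → ℝ≥0∞)
    (hρ : ∑' e : G.edgeSet, ρ e ^ p ≠ ∞) (hQ : ∀ γ ∈ Q, ∑' n : ℕ, ρ s(γ n, γ (n + 1)) = ∞) :
    pModulus G p Q = 0 := by
  have hle : ∀ δ : ℝ≥0∞, δ ≠ 0 → pModulus G p Q ≤ δ ^ p * ∑' e : G.edgeSet, ρ e ^ p := by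
    intro δ hδ
    calc pModulus G p Q ≤ ∑' e : G.edgeSet, (δ * ρ e) ^ p := by
          refine pModulus_le_tsum_rpow G (ρ := fun e => δ * ρ e) fun γ hγ => ?_
          rw [ENNReal.tsum_mul_left, hQ γ hγ, ENNReal.mul_top hδ]
          exact le_top
      _ = δ ^ p * ∑' e : G.edgeSet, ρ e ^ p := by
          simp only [ENNReal.mul_rpow_of_nonneg _ _ hp.le, ENNReal.tsum_mul_left]
  have hlim : Tendsto (fun n : ℕ => ((n : ℝ≥0∞)⁻¹) ^ p * ∑' e : G.edgeSet, ρ e ^ p) atTop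
      (𝓝 0) := by
    have h0 : Tendsto (fun n : ℕ => ((n : ℝ≥0∞)⁻¹) ^ p) atTop (𝓝 0) := by
      rw [← ENNReal.zero_rpow_of_pos hp]
      exact (ENNReal.continuous_rpow_const.tendsto 0).comp ENNReal.tendsto_inv_nat_nhds_zero
    simpa using ENNReal.Tendsto.mul_const h0 (Or.inr hρ)
  exact nonpos_iff_eq_zero.mp <|
    ge_of_tendsto' hlim fun n => hle _ (ENNReal.inv_ne_zero.mpr (ENNReal.natCast_ne_top n))

def edgeVariation {α : Type*} [PseudoEMetricSpace α] (f : V → α) : Sym2 V → ℝ≥0∞ :=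
  Sym2.lift ⟨fun x y => edist (f x) (f y), fun x y => edist_comm (f x) (f y)⟩

@[simp]
theorem edgeVariation_mk {α : Type*} [PseudoEMetricSpace α] (f : V → α) (x y : V) :
    edgeVariation f s(x, y) = edist (f x) (f y) :=
  rfl

theorem tsum_edgeVariation_rpow_le_Ip (hp : 0 ≤ p) (f : V → ℝ) :
    ∑' e : G.edgeSet, edgeVariation f e ^ p ≤ Ip G p f := by
  let dart : (Σ x : (Set.univ : Set V), G.neighborSet x) → G.edgeSet :=
    fun d => ⟨s(d.1, d.2), d.2.2⟩
  have hdart : Function.Surjective dart := by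
    rintro ⟨e, he⟩
    induction e using Sym2.ind with
    | _ x y => exact ⟨⟨⟨x, trivial⟩, ⟨y, he⟩⟩, rfl⟩
  calc ∑' e : G.edgeSet, edgeVariation f e ^ p
      ≤ ∑' d, edgeVariation f (dart d) ^ p :=
        ENNReal.tsum_le_tsum_comp_of_surjective hdart fun e => edgeVariation f e ^ p
    _ = Ip G p f := by
        rw [Ip, IpOn, ENNReal.tsum_sigma']
        refine tsum_congr fun x => tsum_congr fun y => ?_
        rw [edgeVariation_mk, edist_dist, Real.dist_eq, abs_sub_comm,
          ENNReal.ofReal_rpow_of_nonneg (abs_nonneg _) hp]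

theorem tsum_edist_eq_top_of_not_tendsto {α : Type*} [PseudoEMetricSpace α] [CompleteSpace α]
    {u : ℕ → α} (hu : ¬ ∃ c, Tendsto u atTop (𝓝 c)) : ∑' n, edist (u n) (u (n + 1)) = ∞ := by
  by_contra hfin
  exact hu <| cauchySeq_tendsto_of_complete <|
    cauchySeq_of_edist_le_of_tsum_ne_top _ (fun _ => le_rfl) hfin

end PHB

theorem divergence_paths_null_general {V : Type*} (G : SimpleGraph V)
    (p : ℝ) (hp : 1 < p)
    (h : V → ℝ) (hh : h ∈ BHDp G p)
    (F : Set V) :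
    pModulus G p
      {γ ∈ pathsIn G F |
        ¬ ∃ c : ℝ, Tendsto (fun n => h (γ n)) atTop (nhds c)} = 0 := by
  have hp0 : 0 < p := zero_lt_one.trans hp
  refine pModulus_eq_zero_of_tsum_eq_top G hp0 (edgeVariation h) ?_ fun γ hγ => ?_
  · exact ne_top_of_le_ne_top hh.1.1 (tsum_edgeVariation_rpow_le_Ip G hp0.le h)
  · exact tsum_edist_eq_top_of_not_tendsto hγ.2

/-- For `h ∈ BHD_p(Γ)` and an infinite connected `F ⊆ V`, the family of paths
in `Γ_F` along which `h` fails to converge has infinite extremal length. -/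
theorem divergence_paths_null {V : Type*} [Countable V] [Infinite V] (G : SimpleGraph V)
    (hG : G.Connected) (hdeg : BoundedDegree G) (p : ℝ) (hp : 1 < p)
    (h : V → ℝ) (hh : h ∈ BHDp G p)
    (F : Set V) (hFinf : F.Infinite) (hFconn : ConnectedSubset G F) :
    pModulus G p
      {γ ∈ pathsIn G F |
        ¬ ∃ c : ℝ, Tendsto (fun n => h (γ n)) atTop (nhds c)} = 0 :=
  divergence_paths_null_general G p hp h hh F
end
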